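/- arXiv:2003.11513 — 3 statements merged into one kernel-verified Lean document; each statement's English description precedes it below -/
import Mathlib

section
/- There exists a constant C > 0 depending only on b and θ such that for every real-valued function u ∈ C²([−b,b]) with u(−b) = u'(−b) = 0 and every λ ≥ 1 the Carleman estimate holds: ∫_{−b}^{b} (u''(z))² μ_λ(z) dz ≥ C ∫_{−b}^{b} (u''(z))² μ_λ(z) dz + C λ ∫_{−b}^{b} (u'(z))² μ_λ(z) dz + C λ³ ∫_{−b}^{b} u(z)² μ_λ(z) dz. -/
/-!
If `v(-b) = 0`, integrating `(v² μ_λ)' = 2 v v' μ_λ + v² μ_λ'` over `[-b, b]` and using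
`μ_λ' = 4λ(z - θ) μ_λ ≤ -4λ(θ - b) μ_λ` together with `2 v v' ≤ κ v² / 2 + 2 v'² / κ` gives the
weighted Poincaré inequality `λ² ∫ v² μ_λ ≤ (4(θ - b)²)⁻¹ ∫ v'² μ_λ`. Applied to `u` and to `u'`,
and combined with `λ ≥ 1`, it bounds `λ ∫ u'² μ_λ` and `λ³ ∫ u² μ_λ` by multiples of `∫ u''² μ_λ`.
-/

open Set

/-- The Carleman Weight Function `μ_λ(z) = exp(2λ(z−θ)²)`. -/
noncomputable def cwf (lam θ z : ℝ) : ℝ := Real.exp (2 * lam * (z - θ) ^ 2)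

lemma two_mul_mul_add_sq_mul_le_of_le_neg_mul {κ v v' w w' : ℝ} (hκ : 0 < κ) (hw : 0 ≤ w)
    (hw' : w' ≤ -κ * w) :
    2 * v * v' * w + v ^ 2 * w' ≤ 2 / κ * (v' ^ 2 * w) - κ / 2 * (v ^ 2 * w) := by
  have hsq : 0 ≤ 2 / κ * (κ / 2 * v - v') ^ 2 * w := by positivity
  have hexpand : 2 / κ * (κ / 2 * v - v') ^ 2 =
      κ / 2 * v ^ 2 + 2 / κ * v' ^ 2 - 2 * v * v' := by
    field_simp
    ring
  rw [hexpand] at hsq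
  nlinarith [mul_le_mul_of_nonneg_left hw' (sq_nonneg v)]

theorem weighted_poincare_of_deriv_le_neg_mul {a b κ : ℝ} {v w w' : ℝ → ℝ} (hab : a < b)
    (hκ : 0 < κ) (hv : ContDiffOn ℝ 1 v (Icc a b)) (hva : v a = 0)
    (hwc : ContinuousOn w (Icc a b)) (hw : ∀ x ∈ Ioo a b, HasDerivAt w (w' x) x)
    (hw0 : ∀ x ∈ Icc a b, 0 ≤ w x) (hdecay : ∀ x ∈ Ioo a b, w' x ≤ -κ * w x) :
    κ ^ 2 * ∫ x in a..b, v x ^ 2 * w x ≤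
      4 * ∫ x in a..b, derivWithin v (Icc a b) x ^ 2 * w x := by
  set v' := derivWithin v (Icc a b)
  have hvc : ContinuousOn v (Icc a b) := hv.continuousOn
  have hv'c : ContinuousOn v' (Icc a b) :=
    hv.continuousOn_derivWithin (uniqueDiffOn_Icc hab) le_rfl
  have hint0 : IntervalIntegrable (fun x => v x ^ 2 * w x) MeasureTheory.volume a b :=
    ((hvc.pow 2).mul hwc).intervalIntegrable_of_Icc hab.le
  have hint1 : IntervalIntegrable (fun x => v' x ^ 2 * w x) MeasureTheory.volume a b :=
    ((hv'c.pow 2).mul hwc).intervalIntegrable_of_Icc hab.le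
  have hderiv : ∀ x ∈ Ioo a b, HasDerivWithinAt (fun x => v x ^ 2 * w x)
      (2 * v x * v' x * w x + v x ^ 2 * w' x) (Ioi x) x := by
    intro x hx
    have hvx : HasDerivAt v (v' x) x :=
      ((hv.differentiableOn one_ne_zero x (Ioo_subset_Icc_self hx)).hasDerivWithinAt).hasDerivAt
        (Icc_mem_nhds hx.1 hx.2)
    have h : HasDerivAt (fun x => v x ^ 2 * w x) _ x := (hvx.pow 2).mul (hw x hx)
    refine (h.congr_deriv ?_).hasDerivWithinAt
    simp only [Pi.pow_apply, Nat.cast_ofNat]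
    ring
  have hFTC := intervalIntegral.sub_le_integral_of_hasDeriv_right_of_le
    (g := fun x => v x ^ 2 * w x)
    (φ := fun x => 2 / κ * (v' x ^ 2 * w x) - κ / 2 * (v x ^ 2 * w x)) hab.le
    ((hvc.pow 2).mul hwc) hderiv
    ((intervalIntegrable_iff_integrableOn_Icc_of_le hab.le).1
      ((hint1.const_mul _).sub (hint0.const_mul _)))
    (fun x hx => two_mul_mul_add_sq_mul_le_of_le_neg_mul hκ (hw0 x (Ioo_subset_Icc_self hx))
      (hdecay x hx))
  rw [intervalIntegral.integral_sub (hint1.const_mul _) (hint0.const_mul _),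
    intervalIntegral.integral_const_mul, intervalIntegral.integral_const_mul, hva,
    zero_pow two_ne_zero, zero_mul, sub_zero] at hFTC
  have hwb : 0 ≤ v b ^ 2 * w b := mul_nonneg (sq_nonneg _) (hw0 b (right_mem_Icc.2 hab.le))
  calc κ ^ 2 * ∫ x in a..b, v x ^ 2 * w x = 2 * κ * (κ / 2 * ∫ x in a..b, v x ^ 2 * w x) := by
        ring
    _ ≤ 2 * κ * (2 / κ * ∫ x in a..b, v' x ^ 2 * w x) :=
        mul_le_mul_of_nonneg_left (by linarith) (by positivity)
    _ = 4 * ∫ x in a..b, v' x ^ 2 * w x := by field_simp; ring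

lemma cwf_pos (lam θ z : ℝ) : 0 < cwf lam θ z := Real.exp_pos _

lemma cwf_hasDerivAt (lam θ z : ℝ) :
    HasDerivAt (cwf lam θ) (4 * lam * (z - θ) * cwf lam θ z) z := by
  have h := ((((hasDerivAt_id z).sub_const θ).pow 2).const_mul (2 * lam)).exp
  refine h.congr_deriv ?_
  simp only [cwf, id, Pi.pow_apply, Nat.cast_ofNat]
  ring

lemma cwf_weighted_poincare {b θ lam : ℝ} (hb : 0 < b) (hθ : b < θ) (hlam : 0 < lam)
    {v : ℝ → ℝ} (hv : ContDiffOn ℝ 1 v (Icc (-b) b)) (hv0 : v (-b) = 0) :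
    lam ^ 2 * ∫ z in (-b)..b, v z ^ 2 * cwf lam θ z ≤
      (4 * (θ - b) ^ 2)⁻¹ * ∫ z in (-b)..b, derivWithin v (Icc (-b) b) z ^ 2 * cwf lam θ z := by
  have hκ : 0 < 4 * lam * (θ - b) := by have := sub_pos.2 hθ; positivity
  have h := weighted_poincare_of_deriv_le_neg_mul (by linarith) hκ hv hv0 (by unfold cwf; fun_prop)
    (fun z _ => cwf_hasDerivAt lam θ z) (fun z _ => (cwf_pos lam θ _).le)
    (fun z hz => by
      have : 0 ≤ 4 * lam * (b - z) * cwf lam θ z :=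
        mul_nonneg (by nlinarith [hz.2]) (cwf_pos lam θ _).le
      linarith)
  rw [inv_mul_eq_div, le_div_iff₀ (by nlinarith)]
  nlinarith

lemma add_le_of_sq_mul_le_mul {K lam I₀ I₁ I₂ : ℝ} (hK : 0 ≤ K) (hlam : 1 ≤ lam) (hI₁ : 0 ≤ I₁)
    (h₀ : lam ^ 2 * I₀ ≤ K * I₁) (h₁ : lam ^ 2 * I₁ ≤ K * I₂) :
    lam * I₁ + lam ^ 3 * I₀ ≤ (K + K ^ 2) * I₂ := by
  have hI₁' : lam * I₁ ≤ K * I₂ := by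
    nlinarith [mul_le_mul_of_nonneg_right (le_self_pow₀ hlam two_ne_zero) hI₁]
  have hI₀' : lam ^ 3 * I₀ ≤ K * (lam * I₁) := by nlinarith
  nlinarith [mul_le_mul_of_nonneg_left hI₁' hK]

/-- Lemma: one-dimensional Carleman estimate.
Fix `b > 0` and `θ > b`.  There exists a constant `C > 0` depending only on `b` and `θ`
such that for every real-valued `u ∈ C²([−b,b])` with `u(−b) = u'(−b) = 0` and every
`λ ≥ 1`:
`∫_{−b}^b (u'')² μ_λ ≥ C ∫_{−b}^b (u'')² μ_λ + C λ ∫_{−b}^b (u')² μ_λ + C λ³ ∫_{−b}^b u² μ_λ`. -/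
theorem stmt0 (b θ : ℝ) (hb : 0 < b) (hθ : b < θ) :
    ∃ C : ℝ, 0 < C ∧
      ∀ u : ℝ → ℝ, ContDiffOn ℝ 2 u (Icc (-b) b) →
        u (-b) = 0 → derivWithin u (Icc (-b) b) (-b) = 0 →
        ∀ lam : ℝ, 1 ≤ lam →
          (∫ z in (-b)..b,
              (derivWithin (derivWithin u (Icc (-b) b)) (Icc (-b) b) z) ^ 2 * cwf lam θ z) ≥
            C * (∫ z in (-b)..b,
                (derivWithin (derivWithin u (Icc (-b) b)) (Icc (-b) b) z) ^ 2 * cwf lam θ z)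
            + C * lam * (∫ z in (-b)..b,
                (derivWithin u (Icc (-b) b) z) ^ 2 * cwf lam θ z)
            + C * lam ^ 3 * (∫ z in (-b)..b, (u z) ^ 2 * cwf lam θ z) := by
  set K := (4 * (θ - b) ^ 2)⁻¹
  have hK : 0 ≤ K := by positivity
  refine ⟨(1 + K + K ^ 2)⁻¹, by positivity, fun u hu hu0 hu'0 lam hlam => ?_⟩
  have hu' : ContDiffOn ℝ 1 (derivWithin u (Icc (-b) b)) (Icc (-b) b) :=
    hu.derivWithin (uniqueDiffOn_Icc (by linarith)) le_rfl
  have hsum := add_le_of_sq_mul_le_mul hK hlam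
    (intervalIntegral.integral_nonneg (by linarith)
      fun z _ => mul_nonneg (sq_nonneg _) (cwf_pos lam θ _).le)
    (cwf_weighted_poincare hb hθ (by linarith) (hu.of_le one_le_two) hu0)
    (cwf_weighted_poincare hb hθ (by linarith) hu' hu'0)
  rw [ge_iff_le, mul_assoc, mul_assoc, ← mul_add, ← mul_add, inv_mul_le_iff₀ (by positivity)]
  linarith
end

section
/- There exists λ₀ ≥ 1 depending only on b and θ such that for every λ ≥ λ₀ and every real-valued u ∈ C²([−b,b]) with u(−b) = u'(−b) = 0, setting v(z) = u(z) e^{λ(z−θ)²}, one has ∫_{−b}^{b} (u''(z))² e^{2λ(z−θ)²} dz ≥ 4λ ∫_{−b}^{b} (v'(z))² dz + 47 λ³ ∫_{−b}^{b} (z−θ)² u(z)² e^{2λ(z−θ)²} dz. -/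
/-!
Write `w = z - θ` and `v = u e^{λ w²}`. Conjugating by the weight turns `u'' e^{λ w²}` into
`P v = v'' - 4λ w v' + (4λ² w² - 2λ) v`. Pointwise, `(P v)² - 4λ v'² - 47λ³ w² v²` is the
derivative of the flux `-4λ w v'² + (8λ² w - 16λ³ w³) v²` plus the sum of squares
`(v'' + (4λ² w² - 2λ) v)² + (4λ w v')²` plus `λ² (λ w² - 8) v²`, which is nonnegative once
`λ (θ - b)² ≥ 8`. The flux vanishes at `-b` because `v(-b) = v'(-b) = 0` and is nonnegative
at `b` because `w < 0` there, so integrating gives the estimate.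
-/

open Set

theorem HasDerivWithinAt.mul_exp_sq {u : ℝ → ℝ} {u' z : ℝ} {s : Set ℝ} (lam θ : ℝ)
    (hu : HasDerivWithinAt u u' s z) :
    HasDerivWithinAt (fun t => u t * Real.exp (lam * (t - θ) ^ 2))
      ((u' + 2 * lam * (z - θ) * u z) * Real.exp (lam * (z - θ) ^ 2)) s z := by
  have hE : HasDerivAt (fun t => Real.exp (lam * (t - θ) ^ 2))
      (Real.exp (lam * (z - θ) ^ 2) * (lam * (2 * (z - θ) ^ 1 * 1))) z :=
    ((((hasDerivAt_id z).sub_const θ).pow 2).const_mul lam).exp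
  refine (hu.mul hE.hasDerivWithinAt).congr_deriv ?_
  ring

theorem exp_two_mul_mul_eq_sq (lam x : ℝ) :
    Real.exp (2 * lam * x) = Real.exp (lam * x) ^ 2 := by
  rw [sq, ← Real.exp_add]
  ring_nf

namespace Carleman

def flux (lam w p q : ℝ) : ℝ :=
  -4 * lam * w * q ^ 2 + (8 * lam ^ 2 * w - 16 * lam ^ 3 * w ^ 3) * p ^ 2

def fluxDeriv (lam w p q r : ℝ) : ℝ :=
  -4 * lam * q ^ 2 - 8 * lam * w * q * r + (8 * lam ^ 2 - 48 * lam ^ 3 * w ^ 2) * p ^ 2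
    + 2 * (8 * lam ^ 2 * w - 16 * lam ^ 3 * w ^ 3) * p * q

theorem hasDerivAt_flux {v v' : ℝ → ℝ} {r z : ℝ} (lam θ : ℝ)
    (hv : HasDerivAt v (v' z) z) (hv' : HasDerivAt v' r z) :
    HasDerivAt (fun t => flux lam (t - θ) (v t) (v' t))
      (fluxDeriv lam (z - θ) (v z) (v' z) r) z := by
  have hw : HasDerivAt (fun t : ℝ => t - θ) 1 z := (hasDerivAt_id z).sub_const θ
  unfold flux
  refine (((hw.const_mul (-4 * lam)).mul (hv'.pow 2)).add
    (((hw.const_mul (8 * lam ^ 2)).sub ((hw.pow 3).const_mul (16 * lam ^ 3))).mul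
      (hv.pow 2))).congr_deriv ?_
  simp only [fluxDeriv, Nat.cast_ofNat, Pi.pow_apply, Pi.sub_apply]
  ring

theorem flux_nonneg {lam w : ℝ} (p q : ℝ) (hw : w ≤ 0) (hlam : 0 ≤ lam)
    (h : 1 ≤ 2 * lam * w ^ 2) : 0 ≤ flux lam w p q := by
  have e : flux lam w p q
      = 4 * lam * (-w) * q ^ 2 + 8 * lam ^ 2 * (-w) * (2 * lam * w ^ 2 - 1) * p ^ 2 := by
    simp only [flux]; ring
  have h1 : 0 ≤ 2 * lam * w ^ 2 - 1 := by linarith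
  have h2 : 0 ≤ -w := by linarith
  rw [e]; positivity

theorem fluxDeriv_le {lam w : ℝ} (p q r : ℝ) (h : 8 ≤ lam * w ^ 2) :
    fluxDeriv lam w p q r ≤
      (r - 4 * lam * w * q + (4 * lam ^ 2 * w ^ 2 - 2 * lam) * p) ^ 2
        - (4 * lam * q ^ 2 + 47 * lam ^ 3 * (w ^ 2 * p ^ 2)) := by
  have e : (r - 4 * lam * w * q + (4 * lam ^ 2 * w ^ 2 - 2 * lam) * p) ^ 2
        - (4 * lam * q ^ 2 + 47 * lam ^ 3 * (w ^ 2 * p ^ 2)) - fluxDeriv lam w p q r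
      = (r + (4 * lam ^ 2 * w ^ 2 - 2 * lam) * p) ^ 2 + (4 * lam * w * q) ^ 2
        + lam ^ 2 * (lam * w ^ 2 - 8) * p ^ 2 := by
    simp only [fluxDeriv]; ring
  have h8 : 0 ≤ lam * w ^ 2 - 8 := by linarith
  have : 0 ≤ (r + (4 * lam ^ 2 * w ^ 2 - 2 * lam) * p) ^ 2 + (4 * lam * w * q) ^ 2
      + lam ^ 2 * (lam * w ^ 2 - 8) * p ^ 2 := by positivity
  linarith

theorem estimate {a b θ lam : ℝ} {v v' v'' : ℝ → ℝ} (hab : a ≤ b) (hθ : b < θ)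
    (hlam : 8 ≤ lam * (θ - b) ^ 2)
    (hv : ∀ z ∈ Icc a b, HasDerivWithinAt v (v' z) (Icc a b) z)
    (hv' : ∀ z ∈ Icc a b, HasDerivWithinAt v' (v'' z) (Icc a b) z)
    (hv''c : ContinuousOn v'' (Icc a b)) (ha : v a = 0) (ha' : v' a = 0) :
    4 * lam * (∫ z in a..b, v' z ^ 2) + 47 * lam ^ 3 * (∫ z in a..b, (z - θ) ^ 2 * v z ^ 2) ≤
      ∫ z in a..b,
        (v'' z - 4 * lam * (z - θ) * v' z + (4 * lam ^ 2 * (z - θ) ^ 2 - 2 * lam) * v z) ^ 2 := by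
  have hvc : ContinuousOn v (Icc a b) := fun z hz => (hv z hz).continuousWithinAt
  have hv'c : ContinuousOn v' (Icc a b) := fun z hz => (hv' z hz).continuousWithinAt
  have hlam0 : 0 ≤ lam := by nlinarith [sq_nonneg (θ - b)]
  have hweight : ∀ z ∈ Icc a b, 8 ≤ lam * (z - θ) ^ 2 := fun z hz => by
    have hsq : (θ - b) ^ 2 ≤ (z - θ) ^ 2 := by nlinarith [hz.2]
    nlinarith [mul_le_mul_of_nonneg_left hsq hlam0]
  have hflux := intervalIntegral.sub_le_integral_of_hasDeriv_right_of_le hab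
    (g := fun z => flux lam (z - θ) (v z) (v' z))
    (φ := fun z =>
      (v'' z - 4 * lam * (z - θ) * v' z + (4 * lam ^ 2 * (z - θ) ^ 2 - 2 * lam) * v z) ^ 2
        - (4 * lam * v' z ^ 2 + 47 * lam ^ 3 * ((z - θ) ^ 2 * v z ^ 2)))
    (by unfold flux; fun_prop)
    (fun z hz => by
      have hmem : Icc a b ∈ nhds z := Icc_mem_nhds hz.1 hz.2
      exact (hasDerivAt_flux lam θ ((hv z (Ioo_subset_Icc_self hz)).hasDerivAt hmem)
        ((hv' z (Ioo_subset_Icc_self hz)).hasDerivAt hmem)).hasDerivWithinAt)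
    (ContinuousOn.integrableOn_Icc (by fun_prop))
    (fun z hz => fluxDeriv_le _ _ _ (hweight z (Ioo_subset_Icc_self hz)))
  have hfluxa : flux lam (a - θ) (v a) (v' a) = 0 := by simp only [flux, ha, ha']; ring
  have hfluxb : 0 ≤ flux lam (b - θ) (v b) (v' b) :=
    flux_nonneg _ _ (by linarith) hlam0 (by nlinarith [hweight b (right_mem_Icc.2 hab)])
  have hint : ∀ f : ℝ → ℝ, ContinuousOn f (Icc a b) →
      IntervalIntegrable f MeasureTheory.volume a b :=
    fun f hf => hf.intervalIntegrable_of_Icc hab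
  rw [intervalIntegral.integral_sub (hint _ (by fun_prop)) (hint _ (by fun_prop)),
    intervalIntegral.integral_add (hint _ (by fun_prop)) (hint _ (by fun_prop)),
    intervalIntegral.integral_const_mul, intervalIntegral.integral_const_mul] at hflux
  linarith

theorem estimate_mul_exp {a b θ lam : ℝ} {u u' u'' : ℝ → ℝ} (hab : a ≤ b) (hθ : b < θ)
    (hlam : 8 ≤ lam * (θ - b) ^ 2)
    (hu : ∀ z ∈ Icc a b, HasDerivWithinAt u (u' z) (Icc a b) z)
    (hu' : ∀ z ∈ Icc a b, HasDerivWithinAt u' (u'' z) (Icc a b) z)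
    (hu''c : ContinuousOn u'' (Icc a b)) (ha : u a = 0) (ha' : u' a = 0) :
    4 * lam * (∫ z in a..b,
        ((u' z + 2 * lam * (z - θ) * u z) * Real.exp (lam * (z - θ) ^ 2)) ^ 2)
      + 47 * lam ^ 3 * (∫ z in a..b,
        (z - θ) ^ 2 * u z ^ 2 * Real.exp (2 * lam * (z - θ) ^ 2)) ≤
      ∫ z in a..b, u'' z ^ 2 * Real.exp (2 * lam * (z - θ) ^ 2) := by
  have huc : ContinuousOn u (Icc a b) := fun z hz => (hu z hz).continuousWithinAt
  have hu'c : ContinuousOn u' (Icc a b) := fun z hz => (hu' z hz).continuousWithinAt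
  have hv' : ∀ z ∈ Icc a b,
      HasDerivWithinAt (fun t => (u' t + 2 * lam * (t - θ) * u t) * Real.exp (lam * (t - θ) ^ 2))
        ((u'' z + 4 * lam * (z - θ) * u' z + (2 * lam + 4 * lam ^ 2 * (z - θ) ^ 2) * u z)
          * Real.exp (lam * (z - θ) ^ 2)) (Icc a b) z := fun z hz => by
    have hw := ((hasDerivWithinAt_id z (Icc a b)).sub_const θ).const_mul (2 * lam)
    refine (((hu' z hz).add (hw.mul (hu z hz))).mul_exp_sq lam θ).congr_deriv ?_
    simp only [id_eq, Pi.add_apply, Pi.mul_apply]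
    ring
  have h := estimate hab hθ hlam (fun z hz => (hu z hz).mul_exp_sq lam θ) hv'
    (by fun_prop) (by simp [ha]) (by simp [ha, ha'])
  have hF : ∀ z,
      ((u'' z + 4 * lam * (z - θ) * u' z + (2 * lam + 4 * lam ^ 2 * (z - θ) ^ 2) * u z)
        * Real.exp (lam * (z - θ) ^ 2)
      - 4 * lam * (z - θ) * ((u' z + 2 * lam * (z - θ) * u z) * Real.exp (lam * (z - θ) ^ 2))
      + (4 * lam ^ 2 * (z - θ) ^ 2 - 2 * lam) * (u z * Real.exp (lam * (z - θ) ^ 2))) ^ 2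
      = u'' z ^ 2 * Real.exp (2 * lam * (z - θ) ^ 2) := fun z => by
    rw [exp_two_mul_mul_eq_sq]; ring
  have hv : ∀ z, (z - θ) ^ 2 * (u z * Real.exp (lam * (z - θ) ^ 2)) ^ 2
      = (z - θ) ^ 2 * u z ^ 2 * Real.exp (2 * lam * (z - θ) ^ 2) := fun z => by
    rw [exp_two_mul_mul_eq_sq]; ring
  simpa only [hF, hv] using h

end Carleman

/-- Fix `b > 0` and `θ > b`.  There exists `λ₀ ≥ 1` depending only on
`b` and `θ` such that for every `λ ≥ λ₀` and every real-valued `u ∈ C²([−b,b])` with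
`u(−b) = u'(−b) = 0`, setting `v(z) = u(z) e^{λ(z−θ)²}`, one has
`∫_{−b}^b (u'')² e^{2λ(z−θ)²} dz ≥ 4λ ∫_{−b}^b (v')² dz
  + 47 λ³ ∫_{−b}^b (z−θ)² u² e^{2λ(z−θ)²} dz`. -/
theorem stmt2 (b θ : ℝ) (hb : 0 < b) (hθ : b < θ) :
    ∃ lam₀ : ℝ, 1 ≤ lam₀ ∧
      ∀ lam : ℝ, lam₀ ≤ lam →
        ∀ u : ℝ → ℝ, ContDiffOn ℝ 2 u (Icc (-b) b) →
          u (-b) = 0 → derivWithin u (Icc (-b) b) (-b) = 0 →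
          (∫ z in (-b)..b,
              (derivWithin (derivWithin u (Icc (-b) b)) (Icc (-b) b) z) ^ 2 *
                Real.exp (2 * lam * (z - θ) ^ 2)) ≥
            4 * lam * (∫ z in (-b)..b,
                (derivWithin (fun t => u t * Real.exp (lam * (t - θ) ^ 2))
                    (Icc (-b) b) z) ^ 2)
            + 47 * lam ^ 3 * (∫ z in (-b)..b,
                (z - θ) ^ 2 * (u z) ^ 2 * Real.exp (2 * lam * (z - θ) ^ 2)) := by
  refine ⟨max 1 (8 / (θ - b) ^ 2), le_max_left _ _, fun lam hlam u hu hu₀ hu₀' => ?_⟩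
  have hlam' : 8 ≤ lam * (θ - b) ^ 2 :=
    (div_le_iff₀ (by nlinarith)).1 ((le_max_right _ _).trans hlam)
  have hs : UniqueDiffOn ℝ (Icc (-b) b) := uniqueDiffOn_Icc (by linarith)
  have hu₁ := hu.derivWithin hs (m := 1) (by norm_num)
  have hud : ∀ z ∈ Icc (-b) b,
      HasDerivWithinAt u (derivWithin u (Icc (-b) b) z) (Icc (-b) b) z :=
    fun z hz => (hu.differentiableOn (by norm_num) z hz).hasDerivWithinAt
  have hu₁d : ∀ z ∈ Icc (-b) b, HasDerivWithinAt (derivWithin u (Icc (-b) b))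
      (derivWithin (derivWithin u (Icc (-b) b)) (Icc (-b) b) z) (Icc (-b) b) z :=
    fun z hz => (hu₁.differentiableOn one_ne_zero z hz).hasDerivWithinAt
  have hv' : EqOn
      (fun z => derivWithin (fun t => u t * Real.exp (lam * (t - θ) ^ 2)) (Icc (-b) b) z ^ 2)
      (fun z => ((derivWithin u (Icc (-b) b) z + 2 * lam * (z - θ) * u z)
        * Real.exp (lam * (z - θ) ^ 2)) ^ 2) (uIcc (-b) b) := fun z hz => by
    rw [uIcc_of_le (by linarith)] at hz
    simp only [((hud z hz).mul_exp_sq lam θ).derivWithin (hs z hz)]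
  rw [intervalIntegral.integral_congr hv']
  exact Carleman.estimate_mul_exp (by linarith) hθ hlam' hud hu₁d
    (hu₁.derivWithin hs (m := 0) (by norm_num)).continuousOn hu₀ hu₀'
end

section
/- Let a₁ < a₂ and let {Ψ_n}_{n≥0} be the Gram–Schmidt orthonormalization in L²(a₁,a₂) of the functions φ_n(α) = αⁿ e^α, n ≥ 0. Then s_{mn} = ∫_{a₁}^{a₂} Ψ_n'(α) Ψ_m(α) dα satisfies s_{nn} = 1 for every n, and s_{mn} = 0 whenever n < m. Consequently, for every N ∈ ℕ* the matrix S_N = (s_{mn})_{m,n=0}^{N−1} is upper triangular with unit diagonal, hence invertible with det S_N = 1. -/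
open Set

noncomputable section

/-- `φ_n(α) = αⁿ e^α`. -/
def phiGS (n : ℕ) (α : ℝ) : ℝ := α ^ n * Real.exp α

/-- `Ψ` is the Gram–Schmidt orthonormalization in `L²(a₁,a₂)` of the system
`φ_n(α) = αⁿ e^α`: each `Ψ n` is a real linear combination of `φ_0, …, φ_n` with
positive leading coefficient, and the `Ψ n` are orthonormal in `L²(a₁,a₂)`. -/
def IsGS (a₁ a₂ : ℝ) (Ψ : ℕ → ℝ → ℝ) : Prop :=
  (∀ n, ∃ c : ℕ → ℝ, 0 < c n ∧
      ∀ α, Ψ n α = ∑ j ∈ Finset.range (n + 1), c j * phiGS j α) ∧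
  (∀ m n, (∫ α in a₁..a₂, Ψ m α * Ψ n α) = if m = n then 1 else 0)

/-- The matrix `S_N` with entries `s_{mn} = ∫_{a₁}^{a₂} Ψ_n'(α) Ψ_m(α) dα`. -/
def smat (a₁ a₂ : ℝ) (Ψ : ℕ → ℝ → ℝ) (N : ℕ) : Matrix (Fin N) (Fin N) ℝ :=
  Matrix.of fun m n : Fin N => ∫ α in a₁..a₂, deriv (Ψ (n : ℕ)) α * Ψ (m : ℕ) α

/-!
The derivative of `αⁿ e^α` is `αⁿ e^α + n αⁿ⁻¹ e^α`, so `Ψ_n' = Ψ_n + p(α) e^α` with `deg p < n`.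
By Gram–Schmidt, `Ψ_m` is orthogonal to every `φ_k` with `k < m`, hence to `p(α) e^α` whenever
`n ≤ m`, and `s_{mn} = ⟨Ψ_n, Ψ_m⟩ = δ_{mn}` for `n ≤ m`. Thus `S_N` is unitriangular.
-/

theorem continuous_phiGS (n : ℕ) : Continuous (phiGS n) :=
  (continuous_pow n).mul Real.continuous_exp

theorem hasDerivAt_phiGS (n : ℕ) (α : ℝ) :
    HasDerivAt (phiGS n) (phiGS n α + n * phiGS (n - 1) α) α := by
  refine ((hasDerivAt_pow n α).mul (Real.hasDerivAt_exp α)).congr_deriv ?_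
  simp only [phiGS]
  ring

theorem hasDerivAt_sum_phiGS (c : ℕ → ℝ) (n : ℕ) (α : ℝ) :
    HasDerivAt (fun x => ∑ j ∈ Finset.range (n + 1), c j * phiGS j x)
      (∑ j ∈ Finset.range (n + 1), c j * phiGS j α
        + ∑ i ∈ Finset.range n, c (i + 1) * (i + 1) * phiGS i α) α := by
  have hsum := HasDerivAt.fun_sum fun j (_ : j ∈ Finset.range (n + 1)) =>
    (hasDerivAt_phiGS j α).const_mul (c j)
  refine hsum.congr_deriv ?_
  simp only [mul_add, Finset.sum_add_distrib, add_right_inj]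
  rw [Finset.sum_range_succ']
  simp only [Nat.cast_zero, zero_mul, mul_zero, add_zero, Nat.add_sub_cancel, Nat.cast_succ]
  exact Finset.sum_congr rfl fun i _ => by ring

theorem intervalIntegral.integral_finsetSum_const_mul_mul {ι : Type*} (s : Finset ι) (b : ι → ℝ)
    {f : ι → ℝ → ℝ} {g : ℝ → ℝ} (hf : ∀ i, Continuous (f i)) (hg : Continuous g) (a₁ a₂ : ℝ) :
    ∫ α in a₁..a₂, (∑ i ∈ s, b i * f i α) * g α = ∑ i ∈ s, b i * ∫ α in a₁..a₂, f i α * g α := by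
  simp only [Finset.sum_mul, mul_assoc]
  rw [intervalIntegral.integral_finsetSum fun i _ =>
    (continuous_const.fun_mul ((hf i).fun_mul hg)).intervalIntegrable _ _]
  exact Finset.sum_congr rfl fun i _ => intervalIntegral.integral_const_mul _ _

namespace IsGS

variable {a₁ a₂ : ℝ} {Ψ : ℕ → ℝ → ℝ}

theorem continuous (hΨ : IsGS a₁ a₂ Ψ) (n : ℕ) : Continuous (Ψ n) := by
  obtain ⟨c, -, hc⟩ := hΨ.1 n
  rw [funext hc]
  exact continuous_finsetSum _ fun j _ => continuous_const.mul (continuous_phiGS j)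

theorem integral_phiGS_mul_eq_zero (hΨ : IsGS a₁ a₂ Ψ) {k m : ℕ} (hkm : k < m) :
    ∫ α in a₁..a₂, phiGS k α * Ψ m α = 0 := by
  induction k using Nat.strong_induction_on with
  | _ k ih =>
    obtain ⟨c, hck, hc⟩ := hΨ.1 k
    -- expanding `⟨Ψ_k, Ψ_m⟩ = 0` in the `φ_j`, only the term `c_k ⟨φ_k, Ψ_m⟩` survives
    have horth : ∫ α in a₁..a₂, Ψ k α * Ψ m α = 0 := by rw [hΨ.2, if_neg hkm.ne]
    have hlower : ∑ j ∈ Finset.range k, c j * ∫ α in a₁..a₂, phiGS j α * Ψ m α = 0 :=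
      Finset.sum_eq_zero fun j hj => by
        rw [ih j (Finset.mem_range.mp hj) ((Finset.mem_range.mp hj).trans hkm), mul_zero]
    simp only [hc] at horth
    rw [intervalIntegral.integral_finsetSum_const_mul_mul _ _ continuous_phiGS (hΨ.continuous m),
      Finset.sum_range_succ, hlower, zero_add] at horth
    exact (mul_eq_zero.mp horth).resolve_left hck.ne'

theorem integral_sum_phiGS_mul_eq_zero (hΨ : IsGS a₁ a₂ Ψ) (b : ℕ → ℝ) {n m : ℕ} (hnm : n ≤ m) :
    ∫ α in a₁..a₂, (∑ i ∈ Finset.range n, b i * phiGS i α) * Ψ m α = 0 := by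
  rw [intervalIntegral.integral_finsetSum_const_mul_mul _ _ continuous_phiGS (hΨ.continuous m)]
  exact Finset.sum_eq_zero fun i hi => by
    rw [hΨ.integral_phiGS_mul_eq_zero (Finset.mem_range.mp hi |>.trans_le hnm), mul_zero]

theorem exists_deriv_eq (hΨ : IsGS a₁ a₂ Ψ) (n : ℕ) :
    ∃ b : ℕ → ℝ, ∀ α, deriv (Ψ n) α = Ψ n α + ∑ i ∈ Finset.range n, b i * phiGS i α := by
  obtain ⟨c, -, hc⟩ := hΨ.1 n
  refine ⟨fun i => c (i + 1) * (i + 1), fun α => ?_⟩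
  rw [funext hc, (hasDerivAt_sum_phiGS c n α).deriv]

theorem integral_deriv_mul (hΨ : IsGS a₁ a₂ Ψ) {n m : ℕ} (hnm : n ≤ m) :
    ∫ α in a₁..a₂, deriv (Ψ n) α * Ψ m α = if n = m then 1 else 0 := by
  obtain ⟨b, hb⟩ := hΨ.exists_deriv_eq n
  simp only [hb, add_mul]
  rw [intervalIntegral.integral_add
      (((hΨ.continuous n).fun_mul (hΨ.continuous m)).intervalIntegrable _ _)
      (((continuous_finsetSum _ fun i _ => continuous_const.fun_mul (continuous_phiGS i)).fun_mul
        (hΨ.continuous m)).intervalIntegrable _ _),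
    hΨ.2, hΨ.integral_sum_phiGS_mul_eq_zero b hnm, add_zero]

end IsGS

theorem Matrix.det_eq_one_of_isUpperTriangular {n R : Type*} [CommRing R] [Fintype n]
    [LinearOrder n] {M : Matrix n n R} (hM : M.IsUpperTriangular) (hdiag : ∀ i, M i i = 1) :
    M.det = 1 := by
  rw [Matrix.det_of_isUpperTriangular hM]
  exact Finset.prod_eq_one fun i _ => hdiag i

theorem stmt15_general (a₁ a₂ : ℝ) (Ψ : ℕ → ℝ → ℝ) (hΨ : IsGS a₁ a₂ Ψ) :
    (∀ n : ℕ, (∫ α in a₁..a₂, deriv (Ψ n) α * Ψ n α) = 1) ∧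
    (∀ m n : ℕ, n < m → (∫ α in a₁..a₂, deriv (Ψ n) α * Ψ m α) = 0) ∧
    (∀ N : ℕ, 0 < N →
      (smat a₁ a₂ Ψ N).det = 1 ∧
      ∃ B : Matrix (Fin N) (Fin N) ℝ, smat a₁ a₂ Ψ N * B = 1 ∧ B * smat a₁ a₂ Ψ N = 1) := by
  have hdiag (n : ℕ) : ∫ α in a₁..a₂, deriv (Ψ n) α * Ψ n α = 1 := by
    simpa using hΨ.integral_deriv_mul le_rfl
  have hlower {m n : ℕ} (hnm : n < m) : ∫ α in a₁..a₂, deriv (Ψ n) α * Ψ m α = 0 := by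
    simpa [hnm.ne] using hΨ.integral_deriv_mul hnm.le
  refine ⟨hdiag, fun m n => hlower, fun N _ => ?_⟩
  have hdet : (smat a₁ a₂ Ψ N).det = 1 :=
    Matrix.det_eq_one_of_isUpperTriangular (fun i j (hij : j < i) => hlower hij) fun i => hdiag i
  have hunit : IsUnit (smat a₁ a₂ Ψ N).det := hdet ▸ isUnit_one
  exact ⟨hdet, _, Matrix.mul_nonsing_inv _ hunit, Matrix.nonsing_inv_mul _ hunit⟩

/-- For the Gram–Schmidt orthonormalization `{Ψ_n}` of
`φ_n(α) = αⁿ e^α` in `L²(a₁,a₂)`, the numbers `s_{mn} = ∫ Ψ_n' Ψ_m` satisfy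
`s_{nn} = 1` and `s_{mn} = 0` for `n < m`; consequently, for every `N ≥ 1` the matrix
`S_N = (s_{mn})` is invertible with `det S_N = 1`. -/
theorem stmt15 (a₁ a₂ : ℝ) (ha : a₁ < a₂) (Ψ : ℕ → ℝ → ℝ) (hΨ : IsGS a₁ a₂ Ψ) :
    (∀ n : ℕ, (∫ α in a₁..a₂, deriv (Ψ n) α * Ψ n α) = 1) ∧
    (∀ m n : ℕ, n < m → (∫ α in a₁..a₂, deriv (Ψ n) α * Ψ m α) = 0) ∧
    (∀ N : ℕ, 0 < N →
      (smat a₁ a₂ Ψ N).det = 1 ∧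
      ∃ B : Matrix (Fin N) (Fin N) ℝ, smat a₁ a₂ Ψ N * B = 1 ∧ B * smat a₁ a₂ Ψ N = 1) :=
  stmt15_general a₁ a₂ Ψ hΨ

end
end
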